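/- Let ν > 0 and x solve the B_N ODE x_i' = Σ_{j≠i}(1/(x_i−x_j)+1/(x_i+x_j)) + ν/x_i with start in the open chamber. Then for 0 ≤ k ≤ N, t ↦ ẽ_k(x(t)) = e_k(x_1(t)²,...,x_N(t)²) is a polynomial in t of degree k with leading coefficient 2^k (N+ν−1)(N+ν−2)···(N+ν−k) · binom(N,k). -/

import Mathlib

/-!
Write `y = x²`. The B_N equation becomes `y_i' = 4 ∑_{j ≠ i} y_i / (y_i - y_j) + 2ν`, and
differentiating `e_{k+1}(y)` gives `∑_{|B| = k} ∏_B y · ∑_{i ∉ B} y_i'`. In the inner sum, pairs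
`i, j ∉ B` contribute `y_i/(y_i - y_j) + y_j/(y_j - y_i) = 1` each, while the terms with `j ∈ B`
cancel after summing over `B` (move `j` out of `B` and swap `i, j`). Hence
`(e_{k+1}(y))' = 2(N-k)(N-k-1+ν) e_k(y)`, and induction on `k` integrates a polynomial in `t`
each time, multiplying the leading coefficient by `2(N-k)(N-k-1+ν)/(k+1)`.
-/

open Finset

/-- Elementary symmetric polynomial of degree `k` in the variables `x i`, `i ∈ s`. -/
noncomputable def esymm {N : ℕ} (s : Finset (Fin N)) (k : ℕ) (x : Fin N → ℝ) : ℝ :=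
  ∑ A ∈ s.powersetCard k, ∏ i ∈ A, x i

open Polynomial

section

variable {α : Type*} [DecidableEq α]

theorem sum_powersetCard_succ_sum_erase {M : Type*} [AddCommMonoid M] (s : Finset α) (k : ℕ)
    (F : Finset α → α → M) :
    ∑ A ∈ s.powersetCard (k + 1), ∑ i ∈ A, F (A.erase i) i
      = ∑ B ∈ s.powersetCard k, ∑ i ∈ s \ B, F B i := by
  rw [sum_sigma', sum_sigma']
  refine sum_nbij' (fun p => ⟨p.1.erase p.2, p.2⟩) (fun p => ⟨insert p.2 p.1, p.2⟩)
    ?_ ?_ ?_ ?_ fun _ _ => rfl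
  · rintro ⟨A, i⟩ h
    simp only [mem_sigma, mem_powersetCard, mem_sdiff] at h ⊢
    exact ⟨⟨(erase_subset i A).trans h.1.1, by rw [card_erase_of_mem h.2, h.1.2]; rfl⟩,
      h.1.1 h.2, notMem_erase i A⟩
  · rintro ⟨B, i⟩ h
    simp only [mem_sigma, mem_powersetCard, mem_sdiff] at h ⊢
    exact ⟨⟨insert_subset h.2.1 h.1.1, by rw [card_insert_of_notMem h.2.2, h.1.2]⟩,
      mem_insert_self i B⟩
  · rintro ⟨A, i⟩ h
    simp only [mem_sigma] at h
    simp [insert_erase h.2]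
  · rintro ⟨B, i⟩ h
    simp only [mem_sigma, mem_sdiff] at h
    simp [erase_insert h.2.2]

theorem two_mul_sum_sum_erase_of_add_swap {R : Type*} [CommRing R] (s : Finset α)
    (f : α → α → R) (c : R) (h : ∀ i ∈ s, ∀ j ∈ s, i ≠ j → f i j + f j i = c) :
    2 * ∑ i ∈ s, ∑ j ∈ s.erase i, f i j = #s * (#s - 1) * c := by
  have hswap : ∑ i ∈ s, ∑ j ∈ s.erase i, f i j = ∑ i ∈ s, ∑ j ∈ s.erase i, f j i :=
    sum_comm' fun i j => by simp only [mem_erase]; tauto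
  calc 2 * ∑ i ∈ s, ∑ j ∈ s.erase i, f i j
      = ∑ i ∈ s, ∑ j ∈ s.erase i, (f i j + f j i) := by
        rw [two_mul]; nth_rw 2 [hswap]; simp only [← sum_add_distrib]
    _ = ∑ i ∈ s, ∑ j ∈ s.erase i, c :=
        sum_congr rfl fun i hi => sum_congr rfl fun j hj =>
          h i hi j (mem_of_mem_erase hj) (ne_of_mem_erase hj).symm
    _ = #s * (#s - 1) * c := by
        rw [sum_congr rfl fun i hi => by
          rw [sum_const, card_erase_of_mem hi, nsmul_eq_mul, Nat.cast_pred (card_pos.mpr ⟨i, hi⟩)],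
          sum_const, nsmul_eq_mul, mul_assoc]

variable {s : Finset α} {y : α → ℝ}

theorem sum_sum_erase_div_sub (hy : Set.InjOn y s) :
    ∑ i ∈ s, ∑ j ∈ s.erase i, y i / (y i - y j) = #s * (#s - 1) / 2 := by
  have := two_mul_sum_sum_erase_of_add_swap s (fun i j => y i / (y i - y j)) 1
    fun i hi j hj hij => by
      have hne : y i - y j ≠ 0 := sub_ne_zero.mpr fun h => hij (hy hi hj h)
      rw [← neg_sub (y i), div_neg, ← sub_eq_add_neg, ← sub_div, div_self hne]
  linarith

theorem sum_sum_erase_mul_div_sub :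
    ∑ i ∈ s, ∑ j ∈ s.erase i, y i * y j / (y j - y i) = 0 := by
  have := two_mul_sum_sum_erase_of_add_swap s (fun i j => y i * y j / (y j - y i)) 0
    fun i hi j hj hij => by
      rw [← neg_sub (y i), mul_comm (y j), div_neg, neg_add_cancel]
  simpa using this

theorem sum_powersetCard_mul_sum_sdiff_sum_div_sub (k : ℕ) :
    ∑ B ∈ s.powersetCard k, (∏ l ∈ B, y l) * ∑ i ∈ s \ B, ∑ j ∈ B, y i / (y i - y j) = 0 := by
  cases k with
  | zero => simp
  | succ k =>
    set G : Finset α → α → ℝ := fun C j =>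
      (∏ l ∈ insert j C, y l) * ∑ i ∈ s \ insert j C, y i / (y i - y j)
    calc _ = ∑ B ∈ s.powersetCard (k + 1), ∑ j ∈ B, G (B.erase j) j := by
          refine sum_congr rfl fun B _ => ?_
          rw [sum_comm, mul_sum]
          exact sum_congr rfl fun j hj => by simp only [G, insert_erase hj]
      _ = ∑ C ∈ s.powersetCard k, (∏ l ∈ C, y l) *
            ∑ j ∈ s \ C, ∑ i ∈ (s \ C).erase j, y j * y i / (y i - y j) := by
          rw [sum_powersetCard_succ_sum_erase]
          refine sum_congr rfl fun C _ => ?_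
          rw [mul_sum]
          refine sum_congr rfl fun j hj => ?_
          simp only [G, prod_insert (mem_sdiff.mp hj).2, sdiff_insert, mul_sum]
          exact sum_congr rfl fun i _ => by ring
      _ = 0 := by simp only [sum_sum_erase_mul_div_sub, mul_zero, sum_const_zero]

theorem sum_powersetCard_mul_sum_sdiff_drift (hy : Set.InjOn y s) (a b : ℝ) (k : ℕ) :
    ∑ B ∈ s.powersetCard k, (∏ l ∈ B, y l) *
        ∑ i ∈ s \ B, (a * ∑ j ∈ s.erase i, y i / (y i - y j) + b)
      = ((#s : ℝ) - k) * (a * (#s - k - 1) / 2 + b) * ∑ B ∈ s.powersetCard k, ∏ l ∈ B, y l := by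
  have hsplit : ∀ B ∈ s.powersetCard k,
      (∏ l ∈ B, y l) * ∑ i ∈ s \ B, (a * ∑ j ∈ s.erase i, y i / (y i - y j) + b)
        = a * ((∏ l ∈ B, y l) * ∑ i ∈ s \ B, ∑ j ∈ B, y i / (y i - y j))
          + ((#s : ℝ) - k) * (a * (#s - k - 1) / 2 + b) * ∏ l ∈ B, y l := by
    intro B hB
    obtain ⟨hBs, hBk⟩ := mem_powersetCard.mp hB
    have hcard : (#(s \ B) : ℝ) = #s - k := by
      rw [card_sdiff_of_subset hBs, hBk, Nat.cast_sub (hBk ▸ card_le_card hBs)]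
    have hinner : ∀ i ∈ s \ B, ∑ j ∈ s.erase i, y i / (y i - y j)
        = ∑ j ∈ B, y i / (y i - y j) + ∑ j ∈ (s \ B).erase i, y i / (y i - y j) := by
      intro i hi
      have hBi : B ⊆ s.erase i := fun l hl =>
        mem_erase.mpr ⟨fun h => (mem_sdiff.mp hi).2 (h ▸ hl), hBs hl⟩
      rw [← sum_sdiff hBi, erase_sdiff_comm, add_comm]
    rw [sum_add_distrib, ← mul_sum, sum_const, nsmul_eq_mul, sum_congr rfl hinner,
      sum_add_distrib, sum_sum_erase_div_sub (hy.mono (by simp)), hcard]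
    ring
  rw [sum_congr rfl hsplit, sum_add_distrib, ← mul_sum, sum_powersetCard_mul_sum_sdiff_sum_div_sub,
    mul_zero, zero_add, mul_sum]

end

theorem hasDerivAt_esymm_succ {N : ℕ} (s : Finset (Fin N)) (k : ℕ) {y : ℝ → Fin N → ℝ}
    {y' : Fin N → ℝ} {t : ℝ} (hy : ∀ i ∈ s, HasDerivAt (fun u => y u i) (y' i) t) :
    HasDerivAt (fun u => esymm s (k + 1) (y u))
      (∑ B ∈ s.powersetCard k, (∏ i ∈ B, y t i) * ∑ i ∈ s \ B, y' i) t := by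
  have h := HasDerivAt.fun_sum (u := s.powersetCard (k + 1)) fun A hA =>
    HasDerivAt.fun_finsetProd fun i hi => hy i ((mem_powersetCard.mp hA).1 hi)
  simp only [smul_eq_mul] at h
  rw [sum_powersetCard_succ_sum_erase s k fun B i => (∏ j ∈ B, y t j) * y' i] at h
  simpa only [esymm, mul_sum] using h

theorem hasDerivAt_sq_of_typeB {N : ℕ} {ν t : ℝ} {x : ℝ → Fin N → ℝ} {i : Fin N}
    (hpos : ∀ j, 0 < x t j) (hne : ∀ j ≠ i, x t j ≠ x t i)
    (hi : HasDerivAt (fun s => x s i)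
      (∑ j ∈ univ.erase i, (1 / (x t i - x t j) + 1 / (x t i + x t j)) + ν / x t i) t) :
    HasDerivAt (fun s => x s i ^ 2)
      (4 * ∑ j ∈ univ.erase i, x t i ^ 2 / (x t i ^ 2 - x t j ^ 2) + 2 * ν) t := by
  refine (hi.pow 2).congr_deriv ?_
  rw [Nat.cast_ofNat, pow_one, mul_add, mul_sum, mul_sum]
  congr 1
  · refine sum_congr rfl fun j hj => ?_
    have hsub : x t i - x t j ≠ 0 := sub_ne_zero.mpr (hne j (ne_of_mem_erase hj)).symm
    have hadd : x t i + x t j ≠ 0 := (add_pos (hpos i) (hpos j)).ne'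
    have hsq : x t i ^ 2 - x t j ^ 2 ≠ 0 := by
      rw [sq_sub_sq]; exact mul_ne_zero hadd hsub
    field_simp
    ring
  · field_simp [(hpos i).ne']

theorem hasDerivAt_esymm_sq_succ_of_typeB {N : ℕ} {ν t : ℝ} {x : ℝ → Fin N → ℝ}
    (hinj : Function.Injective (x t)) (hpos : ∀ i, 0 < x t i)
    (hode : ∀ i, HasDerivAt (fun s => x s i)
      (∑ j ∈ univ.erase i, (1 / (x t i - x t j) + 1 / (x t i + x t j)) + ν / x t i) t)
    (k : ℕ) :
    HasDerivAt (fun s => esymm univ (k + 1) (fun i => x s i ^ 2))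
      (2 * ((N : ℝ) - k) * (N - k - 1 + ν) * esymm univ k (fun i => x t i ^ 2)) t := by
  have hsq : Set.InjOn (fun i => x t i ^ 2) (univ : Finset (Fin N)) := fun i _ j _ h =>
    hinj ((pow_left_inj₀ (hpos i).le (hpos j).le two_ne_zero).mp h)
  refine (hasDerivAt_esymm_succ univ k (y := fun s i => x s i ^ 2) fun i _ =>
    hasDerivAt_sq_of_typeB hpos (fun j hj => hinj.ne hj) (hode i)).congr_deriv ?_
  rw [sum_powersetCard_mul_sum_sdiff_drift hsq 4 (2 * ν) k, card_univ, Fintype.card_fin, esymm]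
  ring

theorem Polynomial.exists_derivative_eq {K : Type*} [Field K] [CharZero K] (p : K[X]) :
    ∃ q : K[X], derivative q = p := by
  refine ⟨∑ n ∈ p.support, C (p.coeff n / (n + 1)) * X ^ (n + 1), ?_⟩
  rw [derivative_sum]
  conv_rhs => rw [p.as_sum_support_C_mul_X_pow]
  refine sum_congr rfl fun n _ => ?_
  rw [derivative_C_mul_X_pow, Nat.cast_add_one, div_mul_cancel₀ _ (Nat.cast_add_one_ne_zero n),
    Nat.add_sub_cancel]

theorem exists_eqOn_eval_of_hasDerivAt {I : Set ℝ} (hI : Convex ℝ I) {f : ℝ → ℝ} {p : ℝ[X]}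
    (hf : ∀ t ∈ I, HasDerivAt f (p.eval t) t) :
    ∃ q : ℝ[X], derivative q = p ∧ ∀ t ∈ I, f t = q.eval t := by
  obtain ⟨q, hq⟩ := p.exists_derivative_eq
  rcases I.eq_empty_or_nonempty with rfl | ⟨t₀, ht₀⟩
  · exact ⟨q, hq, by simp⟩
  refine ⟨q + C (f t₀ - q.eval t₀), by simp [hq], fun t ht => ?_⟩
  have hconst : ∀ s ∈ I, HasDerivWithinAt (fun u => f u - q.eval u) 0 I s := fun s hs => by
    simpa only [hq, sub_self] using ((hf s hs).fun_sub (q.hasDerivAt s)).hasDerivWithinAt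
  have h := hI.norm_image_sub_le_of_norm_hasDerivWithin_le (C := 0) hconst (by simp) ht₀ ht
  rw [zero_mul, norm_le_zero_iff] at h
  rw [eval_add, eval_C]
  linarith

theorem two_pow_mul_prod_mul_choose_succ {N k : ℕ} (hk : k ≤ N) (ν : ℝ) :
    2 ^ (k + 1) * (∏ m ∈ range (k + 1), ((N : ℝ) + ν - (m + 1))) * N.choose (k + 1) * (k + 1)
      = 2 * ((N : ℝ) - k) * (N - k - 1 + ν)
        * (2 ^ k * (∏ m ∈ range k, ((N : ℝ) + ν - (m + 1))) * N.choose k) := by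
  have h := congrArg (Nat.cast (R := ℝ)) (Nat.choose_succ_right_eq N k)
  push_cast [Nat.cast_sub hk] at h
  rw [prod_range_succ]
  linear_combination 2 ^ (k + 1) * (∏ m ∈ range k, ((N : ℝ) + ν - (m + 1)))
    * ((N : ℝ) + ν - (k + 1)) * h

theorem stmt11_general (N : ℕ) (ν : ℝ) (I : Set ℝ) (hI : Convex ℝ I)
    (x : ℝ → Fin N → ℝ)
    (hcham : ∀ t ∈ I, (∀ i j : Fin N, i < j → x t j < x t i) ∧ ∀ i : Fin N, 0 < x t i)
    (hode : ∀ t ∈ I, ∀ i : Fin N, HasDerivAt (fun s => x s i)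
      (∑ j ∈ Finset.univ.erase i,
          (1 / (x t i - x t j) + 1 / (x t i + x t j)) + ν / x t i) t) :
    ∀ k : ℕ, k ≤ N → ∃ p : Polynomial ℝ,
      p.natDegree ≤ k ∧
      (∀ t ∈ I, esymm Finset.univ k (fun i => (x t i) ^ 2) = p.eval t) ∧
      p.coeff k = 2 ^ k * (∏ m ∈ Finset.range k, ((N : ℝ) + ν - (m + 1)))
        * (N.choose k : ℝ) := by
  intro k hk
  induction k with
  | zero => exact ⟨1, by simp, fun t _ => by simp [esymm], by simp⟩
  | succ k ih =>
    obtain ⟨p, hdeg, hp, hcoeff⟩ := ih (by omega)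
    obtain ⟨q, hq, hpq⟩ := exists_eqOn_eval_of_hasDerivAt hI
      (p := C (2 * ((N : ℝ) - k) * (N - k - 1 + ν)) * p) fun t ht => by
        rw [eval_mul, eval_C, ← hp t ht]
        exact hasDerivAt_esymm_sq_succ_of_typeB (StrictAnti.injective (hcham t ht).1)
          (hcham t ht).2 (hode t ht) k
    refine ⟨q, ?_, hpq, ?_⟩
    · have h : q.natDegree - 1 ≤ k := by
        rw [← natDegree_derivative, hq]
        exact (natDegree_C_mul_le _ p).trans hdeg
      omega
    · have h := coeff_derivative q k
      rw [hq, coeff_C_mul, hcoeff, ← two_pow_mul_prod_mul_choose_succ (by omega)] at h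
      exact (mul_right_cancel₀ (Nat.cast_add_one_ne_zero k) h).symm

theorem stmt11 (N : ℕ) (ν : ℝ) (hν : 0 < ν) (I : Set ℝ) (hI : Convex ℝ I)
    (x : ℝ → Fin N → ℝ)
    (hcham : ∀ t ∈ I, (∀ i j : Fin N, i < j → x t j < x t i) ∧ ∀ i : Fin N, 0 < x t i)
    (hode : ∀ t ∈ I, ∀ i : Fin N, HasDerivAt (fun s => x s i)
      (∑ j ∈ Finset.univ.erase i,
          (1 / (x t i - x t j) + 1 / (x t i + x t j)) + ν / x t i) t) :
    ∀ k : ℕ, k ≤ N → ∃ p : Polynomial ℝ,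
      p.natDegree ≤ k ∧
      (∀ t ∈ I, esymm Finset.univ k (fun i => (x t i) ^ 2) = p.eval t) ∧
      p.coeff k = 2 ^ k * (∏ m ∈ Finset.range k, ((N : ℝ) + ν - (m + 1)))
        * (N.choose k : ℝ) :=
  stmt11_general N ν I hI x hcham hode
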